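/- arXiv:0712.2193 — 3 statements merged into one kernel-verified Lean document; each statement's English description precedes it below -/
import Mathlib

section
/- (Theorem 11.2, Discretization, for D = 𝔻.) Let Γ be a cocompact Fuchsian group, z₀ ∈ 𝔻 a point with trivial stabilizer, V = Γ·z₀, and P : 𝔻 × V → (0,1) a Lyons–Sullivan discretization kernel; set μ(γ) := P(γ·z₀, z₀) for γ ∈ Γ. Let X be a compact metrizable space on which Γ acts by homeomorphisms. Then the restriction map R, sending f̃ to the function x ↦ f̃(z₀, x), is a bijection from the set of Γ-invariant leafwise harmonic functions f̃ : 𝔻 × X → ℝ (all of which are automatically bounded) onto the set of continuous functions Φ : X → ℝ satisfying Φ(x) = Σ_{γ∈Γ} μ(γ) Φ(γ·x) for all x ∈ X. Furthermore, f̃(z,x) is independent of z ∈ 𝔻 if and only if R f̃ is Γ-invariant (R f̃(γ·x) = R f̃(x) for all γ, x). -/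
/-!
Each leaf `z ↦ f z x` of an invariant leafwise harmonic `f` is a bounded harmonic function
(bounded since `f` is continuous on the compact set `K × X`, `K` a compact fundamental set),
so the Lyons–Sullivan kernel reproduces it from its values on the orbit `Γ·z₀`, which by
invariance are `f (η·z₀) x = R f (η⁻¹·x)`:
`f z x = ∑ η, P z η * R f (η⁻¹·x)`.
At `z = z₀` this is the `μ`-harmonicity of `R f`; it also gives injectivity of `R` and the
constancy criterion. Conversely, for a continuous `μ`-harmonic `Φ` the same formula defines
the extension: each `η ↦ Φ (η⁻¹·x)` is `P`-harmonic, hence extends to a bounded harmonic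
function by the discretization theorem. Joint continuity follows from a Lipschitz bound,
uniform in `x`, for harmonic functions bounded by `M` on a ball: apply Schwarz's lemma to
`exp` of a holomorphic function whose real part is the harmonic function.
-/

open Metric Set Filter

noncomputable section

/-- The open unit disc in `ℂ`. -/
def unitDisc : Set ℂ := Metric.ball 0 1

/-- A function `f : ℂ → ℝ` is harmonic on a set `U ⊆ ℂ` if, locally on `U`, it is
the real part of a holomorphic function (for open `U` this is equivalent to being
`C²` with vanishing Laplacian). -/
def HarmonicOnSet (f : ℂ → ℝ) (U : Set ℂ) : Prop :=
  ∀ z ∈ U, ∃ r > 0, Metric.ball z r ⊆ U ∧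
    ∃ g : ℂ → ℂ, DifferentiableOn ℂ g (Metric.ball z r) ∧
      ∀ w ∈ Metric.ball z r, f w = (g w).re

/-- `ρ` is a cocompact Fuchsian group action of `Γ` on the open unit disc: a faithful,
properly discontinuous, cocompact action by Möbius transformations
`z ↦ (αz+β)/(β̄z+ᾱ)` with `|α|² - |β|² = 1`. -/
structure IsCocompactFuchsian (Γ : Type*) [Group Γ] (ρ : Γ → ℂ → ℂ) : Prop where
  one_act : ∀ z ∈ unitDisc, ρ 1 z = z
  mul_act : ∀ γ₁ γ₂ : Γ, ∀ z ∈ unitDisc, ρ (γ₁ * γ₂) z = ρ γ₁ (ρ γ₂ z)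
  maps_disc : ∀ γ : Γ, ∀ z ∈ unitDisc, ρ γ z ∈ unitDisc
  moebius : ∀ γ : Γ, ∃ α β : ℂ, ‖α‖ ^ 2 - ‖β‖ ^ 2 = 1 ∧
    ∀ z ∈ unitDisc, ρ γ z = (α * z + β) / ((starRingEnd ℂ) β * z + (starRingEnd ℂ) α)
  faithful : ∀ γ : Γ, (∀ z ∈ unitDisc, ρ γ z = z) → γ = 1
  properly_discontinuous : ∀ K : Set ℂ, K ⊆ unitDisc → IsCompact K →
    {γ : Γ | ((ρ γ '' K) ∩ K).Nonempty}.Finite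
  cocompact : ∃ K : Set ℂ, K ⊆ unitDisc ∧ IsCompact K ∧ ∀ z ∈ unitDisc, ∃ γ : Γ, ρ γ z ∈ K

/-- `σ` is an action of the group `Γ` on the topological space `X` by homeomorphisms. -/
structure IsActionByHomeomorphisms (Γ : Type*) [Group Γ] (X : Type*) [TopologicalSpace X]
    (σ : Γ → X → X) : Prop where
  one_act : ∀ x : X, σ 1 x = x
  mul_act : ∀ γ₁ γ₂ : Γ, ∀ x : X, σ (γ₁ * γ₂) x = σ γ₁ (σ γ₂ x)
  continuous_act : ∀ γ : Γ, Continuous (σ γ)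

/-- `H` is a bounded harmonic function on the open unit disc. -/
def IsBoundedHarmonic (H : ℂ → ℝ) : Prop :=
  HarmonicOnSet H unitDisc ∧ ∃ M : ℝ, ∀ z ∈ unitDisc, |H z| ≤ M

/-- `f` is a `Γ`-invariant leafwise harmonic function on `𝔻 × X`: it is continuous on
`𝔻 × X`, harmonic in the disc variable for each fixed `x`, and invariant under the
diagonal `Γ`-action. -/
def IsInvariantLeafwiseHarmonic {Γ : Type*} [Group Γ] (ρ : Γ → ℂ → ℂ)
    {X : Type*} [TopologicalSpace X] (σ : Γ → X → X) (f : ℂ → X → ℝ) : Prop :=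
  ContinuousOn (fun p : ℂ × X => f p.1 p.2) (unitDisc ×ˢ (univ : Set X)) ∧
  (∀ x : X, HarmonicOnSet (fun z => f z x) unitDisc) ∧
  (∀ γ : Γ, ∀ z ∈ unitDisc, ∀ x : X, f (ρ γ z) (σ γ x) = f z x)

open Topology

theorem HarmonicOnSet.harmonicOnNhd {f : ℂ → ℝ} {U : Set ℂ} (hf : HarmonicOnSet f U) :
    InnerProductSpace.HarmonicOnNhd f U := by
  intro z hz
  obtain ⟨r, hr, -, g, hg, hre⟩ := hf z hz
  have hball : ball z r ∈ 𝓝 z := isOpen_ball.mem_nhds (mem_ball_self hr)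
  refine (InnerProductSpace.harmonicAt_congr_nhds ?_).mpr (hg.analyticAt hball).harmonicAt_re
  filter_upwards [hball] with w hw using hre w hw

theorem Real.abs_sub_le_exp_mul_abs_exp_sub {a b t : ℝ} (ha : -t ≤ a) (hb : -t ≤ b) :
    |a - b| ≤ Real.exp t * |Real.exp a - Real.exp b| := by
  wlog hba : b ≤ a generalizing a b
  · rw [abs_sub_comm, abs_sub_comm (Real.exp a)]
    exact this hb ha (le_of_not_ge hba)
  have hexp : Real.exp b * (a - b) ≤ Real.exp a - Real.exp b := by
    have := mul_le_mul_of_nonneg_left (Real.add_one_le_exp (a - b)) (Real.exp_pos b).le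
    rw [← Real.exp_add, add_sub_cancel] at this
    linarith
  have hunit : 1 ≤ Real.exp t * Real.exp b := by
    rw [← Real.exp_add]
    exact Real.one_le_exp (by linarith)
  rw [abs_of_nonneg (sub_nonneg.mpr hba),
    abs_of_nonneg (sub_nonneg.mpr (Real.exp_le_exp.mpr hba))]
  nlinarith [Real.exp_pos t]

/-- Schwarz's lemma applied to `exp ∘ g`, which maps the ball into a disc of radius `2 exp M`. -/
theorem abs_re_sub_re_le_of_differentiableOn_ball {g : ℂ → ℂ} {c z : ℂ} {R M : ℝ}
    (hg : DifferentiableOn ℂ g (ball c R)) (hM : ∀ w ∈ ball c R, |(g w).re| ≤ M)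
    (hz : z ∈ ball c R) :
    |(g z).re - (g c).re| ≤ 2 * Real.exp (2 * M) / R * dist z c := by
  have hc : c ∈ ball c R := mem_ball_self (pos_of_mem_ball hz)
  have hnorm : ∀ w ∈ ball c R, ‖Complex.exp (g w)‖ ≤ Real.exp M := fun w hw => by
    rw [Complex.norm_exp]
    exact Real.exp_le_exp.mpr (abs_le.mp (hM w hw)).2
  have hmaps : MapsTo (Complex.exp ∘ g) (ball c R)
      (closedBall (Complex.exp (g c)) (2 * Real.exp M)) := fun w hw => by
    rw [mem_closedBall, two_mul]
    exact (dist_le_norm_add_norm _ _).trans (add_le_add (hnorm w hw) (hnorm c hc))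
  have hschwarz := Complex.dist_le_div_mul_dist_of_mapsTo_ball hg.cexp hmaps hz
  have hlow : ∀ w ∈ ball c R, -M ≤ (g w).re := fun w hw => (abs_le.mp (hM w hw)).1
  calc |(g z).re - (g c).re|
      ≤ Real.exp M * |Real.exp (g z).re - Real.exp (g c).re| :=
        Real.abs_sub_le_exp_mul_abs_exp_sub (hlow z hz) (hlow c hc)
    _ ≤ Real.exp M * dist (Complex.exp (g z)) (Complex.exp (g c)) := by
        rw [← Complex.norm_exp, ← Complex.norm_exp, dist_eq_norm]
        gcongr
        exact abs_norm_sub_norm_le _ _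
    _ ≤ Real.exp M * (2 * Real.exp M / R * dist z c) := by gcongr
    _ = 2 * Real.exp (2 * M) / R * dist z c := by
        rw [two_mul M, Real.exp_add]; ring

theorem HarmonicOnSet.abs_sub_le_of_ball_subset {f : ℂ → ℝ} {U : Set ℂ} {c z : ℂ} {R M : ℝ}
    (hf : HarmonicOnSet f U) (hM : ∀ w ∈ U, |f w| ≤ M) (hR : ball c R ⊆ U)
    (hz : z ∈ ball c R) : |f z - f c| ≤ 2 * Real.exp (2 * M) / R * dist z c := by
  obtain ⟨g, hg, hre⟩ := (hf.harmonicOnNhd.mono hR).exists_analyticOnNhd_ball_re_eq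
  have hc : c ∈ ball c R := mem_ball_self (pos_of_mem_ball hz)
  rw [← hre hz, ← hre hc]
  exact abs_re_sub_re_le_of_differentiableOn_ball hg.differentiableOn
    (fun w hw => by simpa [hre hw] using hM w (hR hw)) hz

theorem continuousAt_uncurry_of_tendstoUniformly {Z X α : Type*} [TopologicalSpace Z]
    [TopologicalSpace X] [UniformSpace α] {f : Z → X → α} {c : Z} {x : X}
    (hunif : TendstoUniformly f (f c) (𝓝 c)) (hcont : ContinuousAt (f c) x) :
    ContinuousAt (Function.uncurry f) (c, x) :=
  TendstoUniformly.tendsto_comp (F := fun q : Z × X => f q.1)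
    (fun u hu => (continuous_fst.tendsto (c, x)).eventually (hunif u hu)) hcont
    continuous_snd.continuousAt

theorem continuousOn_uncurry_of_harmonicOnSet {X : Type*} [TopologicalSpace X]
    {f : ℂ → X → ℝ} {U : Set ℂ} {M : ℝ} (hU : IsOpen U)
    (harm : ∀ x, HarmonicOnSet (fun z => f z x) U) (hM : ∀ z ∈ U, ∀ x, |f z x| ≤ M)
    (hcont : ∀ z ∈ U, Continuous (f z)) :
    ContinuousOn (fun p : ℂ × X => f p.1 p.2) (U ×ˢ (univ : Set X)) := by
  rintro ⟨c, x⟩ ⟨hc, -⟩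
  obtain ⟨R, hR, hball⟩ := Metric.isOpen_iff.mp hU c hc
  refine (continuousAt_uncurry_of_tendstoUniformly ?_ (hcont c hc).continuousAt).continuousWithinAt
  rw [Metric.tendstoUniformly_iff]
  intro ε hε
  have hsmall : ∀ᶠ z in 𝓝 c, 2 * Real.exp (2 * M) / R * dist z c < ε := by
    have : Tendsto (fun z => 2 * Real.exp (2 * M) / R * dist z c) (𝓝 c) (𝓝 0) := by
      simpa using ((continuous_id.dist (continuous_const (y := c))).tendsto c).const_mul
        (2 * Real.exp (2 * M) / R)
    exact this.eventually (gt_mem_nhds hε)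
  filter_upwards [hsmall, ball_mem_nhds c hR] with z hz hzc x'
  rw [Real.dist_eq, abs_sub_comm]
  exact ((harm x').abs_sub_le_of_ball_subset (fun w hw => hM w hw x') hball hzc).trans_lt hz

section Invariant

variable {Γ : Type*} [Group Γ] {ρ : Γ → ℂ → ℂ} {X : Type*} [TopologicalSpace X]
  {σ : Γ → X → X} {P : ℂ → Γ → ℝ} {z₀ : ℂ}

theorem IsActionByHomeomorphisms.act_act_inv (hσ : IsActionByHomeomorphisms Γ X σ)
    (γ : Γ) (x : X) : σ γ (σ γ⁻¹ x) = x := by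
  rw [← hσ.mul_act, mul_inv_cancel, hσ.one_act]

theorem IsActionByHomeomorphisms.act_inv_act_mul (hσ : IsActionByHomeomorphisms Γ X σ)
    (γ η : Γ) (x : X) : σ (γ * η)⁻¹ (σ γ x) = σ η⁻¹ x := by
  rw [← hσ.mul_act, mul_inv_rev, inv_mul_cancel_right]

theorem apply_act_one_eq_apply_inv (hP : ∀ γ η : Γ, ∀ p ∈ unitDisc, P (ρ γ p) (γ * η) = P p η)
    (hz₀ : z₀ ∈ unitDisc) (γ : Γ) : P (ρ γ z₀) 1 = P z₀ γ⁻¹ := by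
  simpa using hP γ γ⁻¹ z₀ hz₀

namespace IsInvariantLeafwiseHarmonic

variable {f : ℂ → X → ℝ}

theorem apply_act (hf : IsInvariantLeafwiseHarmonic ρ σ f) (hσ : IsActionByHomeomorphisms Γ X σ)
    (hz₀ : z₀ ∈ unitDisc) (η : Γ) (x : X) : f (ρ η z₀) x = f z₀ (σ η⁻¹ x) := by
  simpa only [hσ.act_act_inv] using hf.2.2 η z₀ hz₀ (σ η⁻¹ x)

theorem exists_bound [CompactSpace X] (hf : IsInvariantLeafwiseHarmonic ρ σ f)
    (hcocompact : ∃ K : Set ℂ, K ⊆ unitDisc ∧ IsCompact K ∧ ∀ z ∈ unitDisc, ∃ γ : Γ, ρ γ z ∈ K) :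
    ∃ M : ℝ, ∀ z ∈ unitDisc, ∀ x : X, |f z x| ≤ M := by
  obtain ⟨K, hKU, hK, hcover⟩ := hcocompact
  obtain ⟨M, hM⟩ := (hK.prod isCompact_univ).exists_bound_of_continuousOn
    (hf.1.mono (prod_mono hKU subset_rfl))
  refine ⟨M, fun z hz x => ?_⟩
  obtain ⟨γ, hγ⟩ := hcover z hz
  rw [← hf.2.2 γ z hz x]
  exact hM (ρ γ z, σ γ x) ⟨hγ, mem_univ _⟩

theorem isBoundedHarmonic [CompactSpace X] (hf : IsInvariantLeafwiseHarmonic ρ σ f)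
    (hcocompact : ∃ K : Set ℂ, K ⊆ unitDisc ∧ IsCompact K ∧ ∀ z ∈ unitDisc, ∃ γ : Γ, ρ γ z ∈ K)
    (x : X) : IsBoundedHarmonic (fun z => f z x) := by
  obtain ⟨M, hM⟩ := hf.exists_bound hcocompact
  exact ⟨hf.2.1 x, M, fun z hz => hM z hz x⟩

theorem hasSum_kernel [CompactSpace X] (hf : IsInvariantLeafwiseHarmonic ρ σ f)
    (hσ : IsActionByHomeomorphisms Γ X σ)
    (hcocompact : ∃ K : Set ℂ, K ⊆ unitDisc ∧ IsCompact K ∧ ∀ z ∈ unitDisc, ∃ γ : Γ, ρ γ z ∈ K)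
    (hz₀ : z₀ ∈ unitDisc)
    (hP : ∀ H : ℂ → ℝ, IsBoundedHarmonic H →
      ∀ p ∈ unitDisc, HasSum (fun η : Γ => P p η * H (ρ η z₀)) (H p))
    {z : ℂ} (hz : z ∈ unitDisc) (x : X) :
    HasSum (fun η : Γ => P z η * f z₀ (σ η⁻¹ x)) (f z x) := by
  simpa only [hf.apply_act hσ hz₀] using hP _ (hf.isBoundedHarmonic hcocompact x) z hz

end IsInvariantLeafwiseHarmonic

end Invariant

section Extension

variable {Γ : Type*} [Group Γ] {ρ : Γ → ℂ → ℂ} {X : Type*} {σ : Γ → X → X} {P : ℂ → Γ → ℝ}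
  {z₀ : ℂ} {Φ : X → ℝ}

def kernelExtension (P : ℂ → Γ → ℝ) (σ : Γ → X → X) (Φ : X → ℝ) (z : ℂ) (x : X) : ℝ :=
  ∑' η : Γ, P z η * Φ (σ η⁻¹ x)

theorem norm_kernel_mul_le {M : ℝ} {z : ℂ} (hP : ∀ η, 0 ≤ P z η) (hΦ : ∀ x, |Φ x| ≤ M)
    (η : Γ) (x : X) : ‖P z η * Φ (σ η⁻¹ x)‖ ≤ P z η * M := by
  rw [norm_mul, Real.norm_of_nonneg (hP η)]
  exact mul_le_mul_of_nonneg_left (hΦ _) (hP η)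

theorem abs_kernelExtension_le {M : ℝ} {z : ℂ} (hP : ∀ η, 0 ≤ P z η) (hP_sum : HasSum (P z) 1)
    (hΦ : ∀ x, |Φ x| ≤ M) (x : X) : |kernelExtension P σ Φ z x| ≤ M := by
  simpa [kernelExtension] using
    tsum_of_norm_bounded (hP_sum.mul_right M) (norm_kernel_mul_le hP hΦ · x)

theorem continuous_kernelExtension [TopologicalSpace X] {M : ℝ} {z : ℂ}
    (hσ : IsActionByHomeomorphisms Γ X σ) (hΦc : Continuous Φ) (hP : ∀ η, 0 ≤ P z η)
    (hP_sum : HasSum (P z) 1) (hΦ : ∀ x, |Φ x| ≤ M) : Continuous (kernelExtension P σ Φ z) :=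
  continuous_tsum (fun η => continuous_const.mul (hΦc.comp (hσ.continuous_act η⁻¹)))
    (hP_sum.mul_right M).summable (norm_kernel_mul_le hP hΦ)

theorem kernelExtension_act [TopologicalSpace X] (hσ : IsActionByHomeomorphisms Γ X σ)
    (hP : ∀ γ η : Γ, ∀ p ∈ unitDisc, P (ρ γ p) (γ * η) = P p η)
    (γ : Γ) {z : ℂ} (hz : z ∈ unitDisc) (x : X) :
    kernelExtension P σ Φ (ρ γ z) (σ γ x) = kernelExtension P σ Φ z x := by
  rw [kernelExtension, ← (Equiv.mulLeft γ).tsum_eq]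
  simp only [Equiv.coe_mulLeft, hP γ _ z hz, hσ.act_inv_act_mul]
  rfl

theorem hasSum_kernel_orbit [TopologicalSpace X] (hσ : IsActionByHomeomorphisms Γ X σ)
    (hP : ∀ γ η : Γ, ∀ p ∈ unitDisc, P (ρ γ p) (γ * η) = P p η) (hz₀ : z₀ ∈ unitDisc)
    (hΦ : ∀ x, HasSum (fun γ : Γ => P z₀ γ⁻¹ * Φ (σ γ x)) (Φ x)) (x : X) (γ : Γ) :
    HasSum (fun η : Γ => P (ρ γ z₀) η * Φ (σ η⁻¹ x)) (Φ (σ γ⁻¹ x)) := by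
  rw [← ((Equiv.inv Γ).trans (Equiv.mulLeft γ)).hasSum_iff]
  convert hΦ (σ γ⁻¹ x) using 2 with δ
  simp only [Function.comp_apply, Equiv.trans_apply, Equiv.inv_apply, Equiv.coe_mulLeft,
    hP γ δ⁻¹ z₀ hz₀, ← hσ.mul_act, mul_inv_rev, inv_inv]

end Extension

section Discretization

variable {Γ : Type*} [Group Γ] {ρ : Γ → ℂ → ℂ} {X : Type*} [TopologicalSpace X]
  {σ : Γ → X → X} {P : ℂ → Γ → ℝ} {z₀ : ℂ}

theorem isInvariantLeafwiseHarmonic_kernelExtension [CompactSpace X] {Φ : X → ℝ}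
    (hσ : IsActionByHomeomorphisms Γ X σ) (hz₀ : z₀ ∈ unitDisc) (hone : ρ 1 z₀ = z₀)
    (hP_nonneg : ∀ p ∈ unitDisc, ∀ η : Γ, 0 ≤ P p η)
    (hP_sum : ∀ p ∈ unitDisc, HasSum (P p) 1)
    (hP_compat : ∀ γ η : Γ, ∀ p ∈ unitDisc, P (ρ γ p) (γ * η) = P p η)
    (hP_extend : ∀ φ : Γ → ℝ, (∃ M : ℝ, ∀ γ : Γ, |φ γ| ≤ M) →
      (∀ γ : Γ, HasSum (fun η : Γ => P (ρ γ z₀) η * φ η) (φ γ)) →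
      IsBoundedHarmonic (fun p => ∑' η : Γ, P p η * φ η) ∧
        ∀ γ : Γ, (∑' η : Γ, P (ρ γ z₀) η * φ η) = φ γ)
    (hΦc : Continuous Φ) (hΦ : ∀ x, HasSum (fun γ : Γ => P z₀ γ⁻¹ * Φ (σ γ x)) (Φ x)) :
    IsInvariantLeafwiseHarmonic ρ σ (kernelExtension P σ Φ) ∧
      ∀ x, kernelExtension P σ Φ z₀ x = Φ x := by
  obtain ⟨M, hM⟩ := isCompact_univ.exists_bound_of_continuousOn hΦc.continuousOn
  replace hM : ∀ x, |Φ x| ≤ M := fun x => hM x (mem_univ x)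
  have hext (x : X) := hP_extend (fun η => Φ (σ η⁻¹ x)) ⟨M, fun η => hM _⟩
    (hasSum_kernel_orbit hσ hP_compat hz₀ hΦ x)
  have harm (x : X) : HarmonicOnSet (fun z => kernelExtension P σ Φ z x) unitDisc :=
    (hext x).1.1
  refine ⟨⟨continuousOn_uncurry_of_harmonicOnSet isOpen_ball harm
      (fun z hz => abs_kernelExtension_le (hP_nonneg z hz) (hP_sum z hz) hM)
      (fun z hz => continuous_kernelExtension hσ hΦc (hP_nonneg z hz) (hP_sum z hz) hM),
    harm, fun γ z hz x => kernelExtension_act hσ hP_compat γ hz x⟩, fun x => ?_⟩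
  simpa [kernelExtension, hone, hσ.one_act] using (hext x).2 1

theorem IsInvariantLeafwiseHarmonic.forall_eq_iff {f : ℂ → X → ℝ}
    (hf : IsInvariantLeafwiseHarmonic ρ σ f) (hz₀ : z₀ ∈ unitDisc)
    (hmaps : ∀ γ : Γ, ρ γ z₀ ∈ unitDisc) (hP_sum : ∀ p ∈ unitDisc, HasSum (P p) 1)
    (hrep : ∀ z ∈ unitDisc, ∀ x, HasSum (fun η : Γ => P z η * f z₀ (σ η⁻¹ x)) (f z x)) :
    (∀ z ∈ unitDisc, ∀ x : X, f z x = f z₀ x) ↔ ∀ (γ : Γ) (x : X), f z₀ (σ γ x) = f z₀ x := by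
  constructor
  · intro hconst γ x
    rw [← hconst _ (hmaps γ) (σ γ x), hf.2.2 γ z₀ hz₀ x]
  · intro hinv z hz x
    refine (hrep z hz x).unique ?_
    simpa only [hinv, one_mul] using (hP_sum z hz).mul_right (f z₀ x)

end Discretization

theorem discretization_foliated_bundle_general
    {Γ : Type*} [Group Γ] (ρ : Γ → ℂ → ℂ) (hΓ : IsCocompactFuchsian Γ ρ)
    (z₀ : ℂ) (hz₀ : z₀ ∈ unitDisc)
    (P : ℂ → Γ → ℝ)
    (hP_range : ∀ p ∈ unitDisc, ∀ γ : Γ, 0 < P p γ ∧ P p γ < 1)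
    (hP_sum : ∀ p ∈ unitDisc, HasSum (P p) 1)
    (hP_compat : ∀ γ η : Γ, ∀ p ∈ unitDisc, P (ρ γ p) (γ * η) = P p η)
    (hP_extend : ∀ φ : Γ → ℝ, (∃ M : ℝ, ∀ γ : Γ, |φ γ| ≤ M) →
      (∀ γ : Γ, HasSum (fun η : Γ => P (ρ γ z₀) η * φ η) (φ γ)) →
      IsBoundedHarmonic (fun p => ∑' η : Γ, P p η * φ η) ∧
        ∀ γ : Γ, (∑' η : Γ, P (ρ γ z₀) η * φ η) = φ γ)
    (hP_restrict : ∀ H : ℂ → ℝ, IsBoundedHarmonic H →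
      ∀ p ∈ unitDisc, HasSum (fun η : Γ => P p η * H (ρ η z₀)) (H p))
    (μ : Γ → ℝ) (hμ : μ = fun γ => P (ρ γ z₀) 1)
    {X : Type*} [TopologicalSpace X] [CompactSpace X]
    (σ : Γ → X → X) (hσ : IsActionByHomeomorphisms Γ X σ) :
    -- `R` maps invariant leafwise harmonic functions (automatically bounded)
    -- to continuous `μ`-harmonic functions on `X`
    (∀ f : ℂ → X → ℝ, IsInvariantLeafwiseHarmonic ρ σ f →
      (∃ M : ℝ, ∀ z ∈ unitDisc, ∀ x : X, |f z x| ≤ M) ∧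
      Continuous (fun x : X => f z₀ x) ∧
      (∀ x : X, HasSum (fun γ : Γ => μ γ * f z₀ (σ γ x)) (f z₀ x))) ∧
    -- `R` is injective
    (∀ f₁ f₂ : ℂ → X → ℝ, IsInvariantLeafwiseHarmonic ρ σ f₁ →
      IsInvariantLeafwiseHarmonic ρ σ f₂ → (∀ x : X, f₁ z₀ x = f₂ z₀ x) →
      ∀ z ∈ unitDisc, ∀ x : X, f₁ z x = f₂ z x) ∧
    -- `R` is surjective onto continuous `μ`-harmonic functions
    (∀ Φ : X → ℝ, Continuous Φ →
      (∀ x : X, HasSum (fun γ : Γ => μ γ * Φ (σ γ x)) (Φ x)) →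
      ∃ f : ℂ → X → ℝ, IsInvariantLeafwiseHarmonic ρ σ f ∧ ∀ x : X, f z₀ x = Φ x) ∧
    -- `f` is independent of the disc variable iff `R f` is `Γ`-invariant
    (∀ f : ℂ → X → ℝ, IsInvariantLeafwiseHarmonic ρ σ f →
      ((∀ z ∈ unitDisc, ∀ x : X, f z x = f z₀ x) ↔
        (∀ (γ : Γ) (x : X), f z₀ (σ γ x) = f z₀ x))) := by
  obtain rfl : μ = fun γ => P z₀ γ⁻¹ := hμ.trans (funext (apply_act_one_eq_apply_inv hP_compat hz₀))
  have hrep {f : ℂ → X → ℝ} (hf : IsInvariantLeafwiseHarmonic ρ σ f) {z : ℂ} (hz : z ∈ unitDisc)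
      (x : X) : HasSum (fun η : Γ => P z η * f z₀ (σ η⁻¹ x)) (f z x) :=
    hf.hasSum_kernel hσ hΓ.cocompact hz₀ hP_restrict hz x
  refine ⟨fun f hf => ⟨hf.exists_bound hΓ.cocompact, ?_, fun x => ?_⟩, ?_, ?_, ?_⟩
  · exact hf.1.comp_continuous (continuous_const.prodMk continuous_id) (fun x => ⟨hz₀, trivial⟩)
  · simpa [Function.comp_def] using (Equiv.inv Γ).hasSum_iff.mpr (hrep hf hz₀ x)
  · intro f₁ f₂ hf₁ hf₂ heq z hz x
    exact (hrep hf₁ hz x).unique (by simpa only [heq] using hrep hf₂ hz x)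
  · intro Φ hΦc hΦ
    exact ⟨_, isInvariantLeafwiseHarmonic_kernelExtension hσ hz₀ (hΓ.one_act z₀ hz₀)
      (fun p hp η => (hP_range p hp η).1.le) hP_sum hP_compat hP_extend hΦc hΦ⟩
  · exact fun f hf => hf.forall_eq_iff hz₀ (hΓ.maps_disc · z₀ hz₀) hP_sum (fun _ => hrep hf)

/-- **Theorem 11.2 (Discretization, D = 𝔻).** Let `Γ` be a cocompact Fuchsian group,
`z₀ ∈ 𝔻` with trivial stabilizer, `P` a Lyons–Sullivan discretization kernel on
`𝔻 × Γ·z₀` (encoded as `P : ℂ → Γ → ℝ` via `η ↦ η·z₀`), and `μ (γ) = P (γ·z₀, z₀)`.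
For any compact metrizable `Γ`-space `X`, the restriction map `R : f ↦ (x ↦ f (z₀, x))`
is a bijection from `Γ`-invariant leafwise harmonic functions (all of which are bounded)
onto continuous `μ`-harmonic functions on `X`; moreover `f` is independent of the disc
variable iff `R f` is `Γ`-invariant. -/
theorem discretization_foliated_bundle
    {Γ : Type*} [Group Γ] (ρ : Γ → ℂ → ℂ) (hΓ : IsCocompactFuchsian Γ ρ)
    (z₀ : ℂ) (hz₀ : z₀ ∈ unitDisc) (hfree : ∀ γ : Γ, ρ γ z₀ = z₀ → γ = 1)
    (P : ℂ → Γ → ℝ)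
    (hP_range : ∀ p ∈ unitDisc, ∀ γ : Γ, 0 < P p γ ∧ P p γ < 1)
    (hP_sum : ∀ p ∈ unitDisc, HasSum (P p) 1)
    (hP_compat : ∀ γ η : Γ, ∀ p ∈ unitDisc, P (ρ γ p) (γ * η) = P p η)
    (hP_extend : ∀ φ : Γ → ℝ, (∃ M : ℝ, ∀ γ : Γ, |φ γ| ≤ M) →
      (∀ γ : Γ, HasSum (fun η : Γ => P (ρ γ z₀) η * φ η) (φ γ)) →
      IsBoundedHarmonic (fun p => ∑' η : Γ, P p η * φ η) ∧
        ∀ γ : Γ, (∑' η : Γ, P (ρ γ z₀) η * φ η) = φ γ)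
    (hP_restrict : ∀ H : ℂ → ℝ, IsBoundedHarmonic H →
      ∀ p ∈ unitDisc, HasSum (fun η : Γ => P p η * H (ρ η z₀)) (H p))
    (μ : Γ → ℝ) (hμ : μ = fun γ => P (ρ γ z₀) 1)
    {X : Type*} [TopologicalSpace X] [CompactSpace X] [TopologicalSpace.MetrizableSpace X]
    (σ : Γ → X → X) (hσ : IsActionByHomeomorphisms Γ X σ) :
    -- `R` maps invariant leafwise harmonic functions (automatically bounded)
    -- to continuous `μ`-harmonic functions on `X`
    (∀ f : ℂ → X → ℝ, IsInvariantLeafwiseHarmonic ρ σ f →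
      (∃ M : ℝ, ∀ z ∈ unitDisc, ∀ x : X, |f z x| ≤ M) ∧
      Continuous (fun x : X => f z₀ x) ∧
      (∀ x : X, HasSum (fun γ : Γ => μ γ * f z₀ (σ γ x)) (f z₀ x))) ∧
    -- `R` is injective
    (∀ f₁ f₂ : ℂ → X → ℝ, IsInvariantLeafwiseHarmonic ρ σ f₁ →
      IsInvariantLeafwiseHarmonic ρ σ f₂ → (∀ x : X, f₁ z₀ x = f₂ z₀ x) →
      ∀ z ∈ unitDisc, ∀ x : X, f₁ z x = f₂ z x) ∧
    -- `R` is surjective onto continuous `μ`-harmonic functions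
    (∀ Φ : X → ℝ, Continuous Φ →
      (∀ x : X, HasSum (fun γ : Γ => μ γ * Φ (σ γ x)) (Φ x)) →
      ∃ f : ℂ → X → ℝ, IsInvariantLeafwiseHarmonic ρ σ f ∧ ∀ x : X, f z₀ x = Φ x) ∧
    -- `f` is independent of the disc variable iff `R f` is `Γ`-invariant
    (∀ f : ℂ → X → ℝ, IsInvariantLeafwiseHarmonic ρ σ f →
      ((∀ z ∈ unitDisc, ∀ x : X, f z x = f z₀ x) ↔
        (∀ (γ : Γ) (x : X), f z₀ (σ γ x) = f z₀ x))) :=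
  discretization_foliated_bundle_general ρ hΓ z₀ hz₀ P hP_range hP_sum hP_compat hP_extend
    hP_restrict μ hμ σ hσ
end
end

section
/- (Lemma 7.1, transverse monotonicity, for bundles over compact hyperbolic surfaces.) Let Γ be a cocompact Fuchsian group acting on [0,1] by homeomorphisms fixing 0 and 1, and assume that no point x ∈ (0,1) has a finite Γ-orbit. Let f̃ : 𝔻 × [0,1] → ℝ be a Γ-invariant leafwise harmonic function with f̃(z,0) = 0 and f̃(z,1) = 1 for all z ∈ 𝔻. Then for every z ∈ 𝔻 the function x ↦ f̃(z,x) is weakly monotone increasing on [0,1]. -/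
/-!
Put `g(z; x, y) = f(z, y) - f(z, x)` on the compact set of pairs `x ≤ y`. It is leafwise harmonic
and invariant under the diagonal action, so by cocompactness its infimum `m` is attained, and by
the minimum principle it is attained along a whole leaf. The pairs whose leaf carries the constant
value `m` form a nonempty closed invariant set; as every `σ γ` is increasing, its
lexicographically least element is fixed by `Γ`. Without finite orbits in `(0,1)` both coordinates
of that pair are endpoints, where `g` takes the values `0` or `1`, so `m ≥ 0`.
-/

open Metric Set Filter

noncomputable section

open Topology

namespace HarmonicOnSet

variable {F G : ℂ → ℝ} {U : Set ℂ} {z : ℂ}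

lemma continuousAt (hF : HarmonicOnSet F U) (hz : z ∈ U) : ContinuousAt F z := by
  obtain ⟨r, hr, -, g, hg, hFg⟩ := hF z hz
  have hball : ball z r ∈ 𝓝 z := ball_mem_nhds z hr
  refine ContinuousAt.congr ?_ (eventuallyEq_of_mem hball fun w hw => (hFg w hw).symm)
  exact Complex.continuous_re.continuousAt.comp ((hg.differentiableAt hball).continuousAt)

lemma sub (hF : HarmonicOnSet F U) (hG : HarmonicOnSet G U) :
    HarmonicOnSet (fun z => F z - G z) U := by
  intro z hz
  obtain ⟨r₁, hr₁, hU₁, g₁, hg₁, hFg₁⟩ := hF z hz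
  obtain ⟨r₂, hr₂, -, g₂, hg₂, hGg₂⟩ := hG z hz
  have h₁ : ball z (min r₁ r₂) ⊆ ball z r₁ := ball_subset_ball (min_le_left _ _)
  have h₂ : ball z (min r₁ r₂) ⊆ ball z r₂ := ball_subset_ball (min_le_right _ _)
  refine ⟨min r₁ r₂, lt_min hr₁ hr₂, h₁.trans hU₁, fun w => g₁ w - g₂ w,
    (hg₁.mono h₁).sub (hg₂.mono h₂), fun w hw => ?_⟩
  simp only [Complex.sub_re, hFg₁ w (h₁ hw), hGg₂ w (h₂ hw)]

/-- Locally `F = Re g`, so `‖exp (-g)‖ = exp (-F)` has a local maximum and the maximum modulus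
principle applies. -/
lemma eventually_eq_of_isLocalMin (hF : HarmonicOnSet F U) (hz : z ∈ U)
    (hmin : IsLocalMin F z) : ∀ᶠ w in 𝓝 z, F w = F z := by
  obtain ⟨r, hr, -, g, hg, hFg⟩ := hF z hz
  have hball : ball z r ∈ 𝓝 z := ball_mem_nhds z hr
  have hnorm : ∀ᶠ w in 𝓝 z, ‖Complex.exp (-g w)‖ = Real.exp (-F w) :=
    eventually_of_mem hball fun w hw => by
      rw [Complex.norm_exp, Complex.neg_re, hFg w hw]
  have hdiff : ∀ᶠ w in 𝓝 z, DifferentiableAt ℂ (fun w => Complex.exp (-g w)) w :=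
    eventually_of_mem hball fun w hw =>
      ((hg.differentiableAt (isOpen_ball.mem_nhds hw)).neg).cexp
  have hmax : IsLocalMax (norm ∘ fun w => Complex.exp (-g w)) z := by
    filter_upwards [hmin, hnorm] with w hw hw'
    rw [Function.comp_apply, Function.comp_apply, hw', hnorm.self_of_nhds]
    exact Real.exp_le_exp.2 (neg_le_neg hw)
  filter_upwards [Complex.eventually_eq_of_isLocalMax_norm hdiff hmax, hnorm] with w hw hw'
  have := congrArg norm hw
  rw [hw', hnorm.self_of_nhds] at this
  exact neg_injective (Real.exp_injective this)

lemma eqOn_of_isPreconnected_of_isMinOn (hU : IsPreconnected U) (hF : HarmonicOnSet F U)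
    {z₀ : ℂ} (hz₀ : z₀ ∈ U) (hmin : IsMinOn F U z₀) : EqOn F (fun _ => F z₀) U := by
  have hnhds : ∀ z ∈ U, U ∈ 𝓝 z := fun z hz =>
    let ⟨r, hr, hU, _⟩ := hF z hz; mem_of_superset (ball_mem_nhds z hr) hU
  have hlocal : ∀ z ∈ U, F z = F z₀ → ∀ᶠ w in 𝓝 z, F w = F z₀ := fun z hz hFz => by
    have hzmin : IsLocalMin F z :=
      mem_of_superset (hnhds z hz) fun w hw => hFz ▸ hmin hw
    simpa only [hFz] using hF.eventually_eq_of_isLocalMin hz hzmin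
  set V := {z | ∀ᶠ w in 𝓝 z, F w = F z₀}
  have hV : U ⊆ V := by
    refine hU.subset_of_closure_inter_subset isOpen_setOfPred_eventually_nhds
      ⟨z₀, hz₀, hlocal z₀ hz₀ rfl⟩ fun z ⟨hzV, hzU⟩ => hlocal z hzU ?_
    have hconst : F '' V ⊆ {F z₀} := by
      rintro _ ⟨w, hw, rfl⟩
      exact hw.self_of_nhds
    simpa using closure_mono hconst
      ((hF.continuousAt hzU).continuousWithinAt.mem_closure_image hzV)
  exact fun z hz => (hV hz).self_of_nhds

end HarmonicOnSet

namespace IsActionByHomeomorphisms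

variable {Γ X : Type*} [Group Γ] [TopologicalSpace X] {σ : Γ → X → X}

lemma act_act_inv_s8 (hσ : IsActionByHomeomorphisms Γ X σ) (γ : Γ) (x : X) :
    σ γ (σ γ⁻¹ x) = x := by
  rw [← hσ.mul_act, mul_inv_cancel, hσ.one_act]

lemma injective_act (hσ : IsActionByHomeomorphisms Γ X σ) (γ : Γ) : Function.Injective (σ γ) :=
  Function.LeftInverse.injective fun x => by simpa using hσ.act_act_inv_s8 γ⁻¹ x

lemma monotone_act {σ : Γ → unitInterval → unitInterval}
    (hσ : IsActionByHomeomorphisms Γ unitInterval σ) {γ : Γ} (h0 : σ γ 0 = 0) :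
    Monotone (σ γ) :=
  ((hσ.continuous_act γ).strictMono_of_inj_boundedOrder
    (by rw [show (⊥ : unitInterval) = 0 from rfl, h0]; exact bot_le)
    (hσ.injective_act γ)).monotone

variable [LinearOrder X] [OrderClosedTopology X] [CompactSpace X]

/-- The least point `a` of `S` satisfies `a ≤ σ γ⁻¹ a`, hence `σ γ a ≤ a` by monotonicity. -/
lemma exists_mem_forall_act_eq (hσ : IsActionByHomeomorphisms Γ X σ)
    (hmono : ∀ γ, Monotone (σ γ)) {S : Set X} (hS : IsClosed S) (hne : S.Nonempty)
    (hinv : ∀ γ, MapsTo (σ γ) S S) : ∃ a ∈ S, ∀ γ, σ γ a = a := by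
  obtain ⟨a, haS, hleast⟩ := hS.isCompact.exists_isLeast hne
  refine ⟨a, haS, fun γ => le_antisymm ?_ (hleast (hinv γ haS))⟩
  simpa only [hσ.act_act_inv_s8] using hmono γ (hleast (hinv γ⁻¹ haS))

/-- Take the lexicographically least point of `C`. -/
lemma exists_prod_mem_forall_act_eq (hσ : IsActionByHomeomorphisms Γ X σ)
    (hmono : ∀ γ, Monotone (σ γ)) {C : Set (X × X)} (hC : IsClosed C) (hne : C.Nonempty)
    (hinv : ∀ γ, MapsTo (Prod.map (σ γ) (σ γ)) C C) :
    ∃ a b, (a, b) ∈ C ∧ (∀ γ, σ γ a = a) ∧ ∀ γ, σ γ b = b := by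
  obtain ⟨a, ⟨⟨a', b'⟩, hab', rfl⟩, ha⟩ := hσ.exists_mem_forall_act_eq hmono
    (hC.isCompact.image continuous_fst).isClosed (hne.image _)
    fun γ => mapsTo_image_iff.2 fun q hq => ⟨_, hinv γ hq, rfl⟩
  obtain ⟨b, hb, hbfix⟩ := hσ.exists_mem_forall_act_eq hmono
    (hC.preimage (Continuous.prodMk_right a')) ⟨b', hab'⟩
    fun γ b hb => by simpa [ha γ] using hinv γ hb
  exact ⟨a', b, hb, ha, hbfix⟩

end IsActionByHomeomorphisms

lemma eq_zero_or_eq_one_of_forall_act_eq {Γ : Type*} {σ : Γ → unitInterval → unitInterval}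
    (hnofinite : ∀ x : unitInterval, 0 < (x : ℝ) → (x : ℝ) < 1 →
      (Set.range fun γ : Γ => σ γ x).Infinite)
    {a : unitInterval} (ha : ∀ γ, σ γ a = a) : a = 0 ∨ a = 1 := by
  by_contra! h
  refine hnofinite a (unitInterval.pos_iff_ne_zero.2 h.1) (unitInterval.lt_one_iff_ne_one.2 h.2)
    ((finite_singleton a).subset ?_)
  rintro _ ⟨γ, rfl⟩
  exact ha γ

lemma IsCocompactFuchsian.act_act_inv_s8 {Γ : Type*} [Group Γ] {ρ : Γ → ℂ → ℂ}
    (hΓ : IsCocompactFuchsian Γ ρ) (γ : Γ) {z : ℂ} (hz : z ∈ unitDisc) : ρ γ (ρ γ⁻¹ z) = z := by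
  rw [← hΓ.mul_act γ γ⁻¹ z hz, mul_inv_cancel, hΓ.one_act z hz]

section Leaves

variable {Γ X : Type*} [Group Γ] {ρ : Γ → ℂ → ℂ} {τ : Γ → X → X}
  {F : ℂ → X → ℝ}

def leafLevelSet (F : ℂ → X → ℝ) (m : ℝ) : Set X := {x | ∀ z ∈ unitDisc, F z x = m}

lemma isClosed_leafLevelSet [TopologicalSpace X]
    (hFc : ContinuousOn (fun p : ℂ × X => F p.1 p.2) (unitDisc ×ˢ univ)) (m : ℝ) :
    IsClosed (leafLevelSet F m) := by
  simp only [leafLevelSet, ofPred_forall]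
  exact isClosed_biInter fun z hz => isClosed_eq
    (hFc.comp_continuous (continuous_const.prodMk continuous_id) fun _ => ⟨hz, mem_univ _⟩)
    continuous_const

lemma mapsTo_leafLevelSet (hΓ : IsCocompactFuchsian Γ ρ)
    (hFinv : ∀ γ, ∀ z ∈ unitDisc, ∀ x, F (ρ γ z) (τ γ x) = F z x) (m : ℝ) (γ : Γ) :
    MapsTo (τ γ) (leafLevelSet F m) (leafLevelSet F m) := fun x hx z hz => by
  have hz' := hΓ.maps_disc γ⁻¹ z hz
  rw [← hΓ.act_act_inv_s8 γ hz, hFinv γ _ hz' x, hx _ hz']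

lemma continuousOn_sub_leaves [TopologicalSpace X] {f : ℂ → X → ℝ}
    (hf : ContinuousOn (fun p : ℂ × X => f p.1 p.2) (unitDisc ×ˢ univ)) :
    ContinuousOn (fun p : ℂ × (X × X) => f p.1 p.2.2 - f p.1 p.2.1) (unitDisc ×ˢ univ) := by
  have hslice : ∀ g : X × X → X, Continuous g →
      ContinuousOn (fun p : ℂ × (X × X) => f p.1 (g p.2)) (unitDisc ×ˢ univ) := fun g hg =>
    hf.comp (continuous_fst.prodMk (hg.comp continuous_snd)).continuousOn
      fun p hp => ⟨hp.1, mem_univ _⟩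
  exact (hslice _ continuous_snd).sub (hslice _ continuous_fst)

/-- By cocompactness the minimum over `𝔻 × K` is attained over a compact fundamental set, and the
minimum principle spreads it along the whole leaf through the minimum point. -/
lemma exists_mem_leafLevelSet_forall_le [TopologicalSpace X] (hΓ : IsCocompactFuchsian Γ ρ)
    {K : Set X} (hK : IsCompact K) (hKne : K.Nonempty) (hτK : ∀ γ, MapsTo (τ γ) K K)
    (hFc : ContinuousOn (fun p : ℂ × X => F p.1 p.2) (unitDisc ×ˢ univ))
    (hFh : ∀ x ∈ K, HarmonicOnSet (fun z => F z x) unitDisc)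
    (hFinv : ∀ γ, ∀ z ∈ unitDisc, ∀ x, F (ρ γ z) (τ γ x) = F z x) :
    ∃ m : ℝ, ∃ x₀ ∈ K, x₀ ∈ leafLevelSet F m ∧ ∀ z ∈ unitDisc, ∀ x ∈ K, m ≤ F z x := by
  obtain ⟨D, hD, hDc, hcover⟩ := hΓ.cocompact
  obtain ⟨γ₀, hγ₀⟩ := hcover 0 (mem_ball_self one_pos)
  obtain ⟨⟨z₀, x₀⟩, ⟨hz₀, hx₀⟩, hmin⟩ := (hDc.prod hK).exists_isMinOn
    ⟨(_, hKne.some), hγ₀, hKne.some_mem⟩ (hFc.mono (prod_mono hD (subset_univ K)))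
  have hle : ∀ z ∈ unitDisc, ∀ x ∈ K, F z₀ x₀ ≤ F z x := fun z hz x hx => by
    obtain ⟨γ, hγ⟩ := hcover z hz
    simpa only [hFinv γ z hz x] using isMinOn_iff.1 hmin _ (mk_mem_prod hγ (hτK γ hx))
  refine ⟨F z₀ x₀, x₀, hx₀, fun z hz => ?_, hle⟩
  exact (hFh x₀ hx₀).eqOn_of_isPreconnected_of_isMinOn (convex_ball 0 1).isPreconnected
    (hD hz₀) (fun z hz => hle z hz x₀ hx₀) hz

end Leaves

theorem transverse_monotonicity_general
    {Γ : Type*} [Group Γ] (ρ : Γ → ℂ → ℂ) (hΓ : IsCocompactFuchsian Γ ρ)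
    (σ : Γ → unitInterval → unitInterval) (hσ : IsActionByHomeomorphisms Γ unitInterval σ)
    (hfix0 : ∀ γ : Γ, σ γ 0 = 0)
    (hnofinite : ∀ x : unitInterval, 0 < (x : ℝ) → (x : ℝ) < 1 →
      (Set.range fun γ : Γ => σ γ x).Infinite)
    (f : ℂ → unitInterval → ℝ)
    (hcont : ContinuousOn (fun p : ℂ × unitInterval => f p.1 p.2)
      (unitDisc ×ˢ (univ : Set unitInterval)))
    (hharm : ∀ x : unitInterval, HarmonicOnSet (fun z => f z x) unitDisc)
    (hinv : ∀ γ : Γ, ∀ z ∈ unitDisc, ∀ x : unitInterval, f (ρ γ z) (σ γ x) = f z x)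
    (hbd0 : ∀ z ∈ unitDisc, f z 0 = 0) (hbd1 : ∀ z ∈ unitDisc, f z 1 = 1) :
    ∀ z ∈ unitDisc, Monotone (fun x : unitInterval => f z x) := by
  set K : Set (unitInterval × unitInterval) := {q | q.1 ≤ q.2}
  set F : ℂ → unitInterval × unitInterval → ℝ := fun z q => f z q.2 - f z q.1
  have hmono : ∀ γ, Monotone (σ γ) := fun γ => hσ.monotone_act (hfix0 γ)
  have hK : IsClosed K := isClosed_le continuous_fst continuous_snd
  have hτK : ∀ γ, MapsTo (Prod.map (σ γ) (σ γ)) K K := fun γ _ hq => hmono γ hq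
  have hFc : ContinuousOn (fun p : ℂ × _ => F p.1 p.2) (unitDisc ×ˢ univ) :=
    continuousOn_sub_leaves hcont
  have hFinv : ∀ γ, ∀ z ∈ unitDisc, ∀ q, F (ρ γ z) (Prod.map (σ γ) (σ γ) q) = F z q :=
    fun γ z hz q => by simp only [F, Prod.map, hinv γ z hz]
  obtain ⟨m, q₀, hq₀, hq₀m, hmin⟩ := exists_mem_leafLevelSet_forall_le hΓ hK.isCompact
    ⟨(0, 0), le_refl (0 : unitInterval)⟩ hτK hFc
    (fun q _ => (hharm q.2).sub (hharm q.1)) hFinv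
  obtain ⟨a, b, ⟨hab, habm⟩, ha, hb⟩ := hσ.exists_prod_mem_forall_act_eq hmono
    (hK.inter (isClosed_leafLevelSet hFc m))
    ⟨q₀, hq₀, hq₀m⟩ fun γ => (hτK γ).inter_inter (mapsTo_leafLevelSet hΓ hFinv m γ)
  have hm : 0 ≤ m := by
    have h0 : (0 : ℂ) ∈ unitDisc := mem_ball_self one_pos
    rw [← habm 0 h0]
    rcases eq_zero_or_eq_one_of_forall_act_eq hnofinite ha with rfl | rfl
    · rcases eq_zero_or_eq_one_of_forall_act_eq hnofinite hb with rfl | rfl <;>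
        simp [F, hbd0 0 h0, hbd1 0 h0]
    · obtain rfl : b = 1 := le_antisymm unitInterval.le_one' hab
      simp [F]
  intro z hz x y hxy
  have hxy' := hmin z hz (x, y) hxy
  simp only [F] at hxy'
  linarith

/-- **Lemma 7.1 (transverse monotonicity).** Let `Γ` be a cocompact Fuchsian group acting
on `[0,1]` by homeomorphisms fixing `0` and `1`, with no finite orbit in `(0,1)`. If
`f : 𝔻 × [0,1] → ℝ` is a `Γ`-invariant leafwise harmonic function with `f(·,0) = 0` and
`f(·,1) = 1`, then `f(z,·)` is weakly monotone increasing for every `z ∈ 𝔻`. -/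
theorem transverse_monotonicity
    {Γ : Type*} [Group Γ] (ρ : Γ → ℂ → ℂ) (hΓ : IsCocompactFuchsian Γ ρ)
    (σ : Γ → unitInterval → unitInterval) (hσ : IsActionByHomeomorphisms Γ unitInterval σ)
    (hfix0 : ∀ γ : Γ, σ γ 0 = 0) (hfix1 : ∀ γ : Γ, σ γ 1 = 1)
    (hnofinite : ∀ x : unitInterval, 0 < (x : ℝ) → (x : ℝ) < 1 →
      (Set.range fun γ : Γ => σ γ x).Infinite)
    (f : ℂ → unitInterval → ℝ)
    (hcont : ContinuousOn (fun p : ℂ × unitInterval => f p.1 p.2)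
      (unitDisc ×ˢ (univ : Set unitInterval)))
    (hharm : ∀ x : unitInterval, HarmonicOnSet (fun z => f z x) unitDisc)
    (hinv : ∀ γ : Γ, ∀ z ∈ unitDisc, ∀ x : unitInterval, f (ρ γ z) (σ γ x) = f z x)
    (hbd0 : ∀ z ∈ unitDisc, f z 0 = 0) (hbd1 : ∀ z ∈ unitDisc, f z 1 = 1) :
    ∀ z ∈ unitDisc, Monotone (fun x : unitInterval => f z x) :=
  transverse_monotonicity_general ρ hΓ σ hσ hfix0 hnofinite f hcont hharm hinv hbd0 hbd1
end
end

section
/- (Section 12: invariance of the leafwise holomorphic function under SU(1,1).) Let α, β, u, v, z ∈ ℂ satisfy |α|² − |β|² = 1, |v| < |u|, and |z| < 1. Set r = αu + βv̄, s = αv + βū, and w = (αz + β)/(β̄z + ᾱ). Then: (a) |r|² − |s|² = (|α|² − |β|²)(|u|² − |v|²) = |u|² − |v|², so in particular |s| < |r|; (b) β̄z + ᾱ ≠ 0 and |w| < 1; (c) u − v̄z ≠ 0, r − s̄w ≠ 0, and (r̄w − s)/(r − s̄w) = (ūz − v)/(u − v̄z). -/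
open ComplexConjugate

/-!
Both identities in (a) and (b) are instances of the invariance of the hermitian form
`|x|² - |y|²` under `SU(1,1)`. For (c), clearing the common denominator `β̄z + ᾱ` of `w` turns
`r - s̄w` and `r̄w - s` into `u - v̄z` and `ūz - v` divided by `β̄z + ᾱ`, using `αᾱ - ββ̄ = 1`;
the quotient therefore does not change.
-/

namespace SU11

lemma sq_norm_sub_sq_norm_eq_det_mul (α β u v : ℂ) :
    ‖α * u + β * conj v‖ ^ 2 - ‖α * v + β * conj u‖ ^ 2
      = (‖α‖ ^ 2 - ‖β‖ ^ 2) * (‖u‖ ^ 2 - ‖v‖ ^ 2) := by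
  simp only [Complex.sq_norm, Complex.normSq_apply, Complex.add_re, Complex.add_im,
    Complex.mul_re, Complex.mul_im, Complex.conj_re, Complex.conj_im]
  ring

lemma sq_norm_denom_sub_sq_norm_numer (α β z : ℂ) :
    ‖conj β * z + conj α‖ ^ 2 - ‖α * z + β‖ ^ 2 = (‖α‖ ^ 2 - ‖β‖ ^ 2) * (1 - ‖z‖ ^ 2) := by
  simp only [Complex.sq_norm, Complex.normSq_apply, Complex.add_re, Complex.add_im,
    Complex.mul_re, Complex.mul_im, Complex.conj_re, Complex.conj_im]
  ring

section Determinant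

variable {α β : ℂ} (hαβ : ‖α‖ ^ 2 - ‖β‖ ^ 2 = 1)
include hαβ

lemma mul_conj_sub_mul_conj_eq_one : α * conj α - β * conj β = 1 := by
  rw [Complex.mul_conj, Complex.mul_conj, ← Complex.sq_norm, ← Complex.sq_norm]
  exact_mod_cast hαβ

lemma norm_numer_lt_norm_denom {z : ℂ} (hz : ‖z‖ < 1) :
    ‖α * z + β‖ < ‖conj β * z + conj α‖ := by
  have hz2 : ‖z‖ ^ 2 < 1 := pow_lt_one₀ (norm_nonneg z) hz two_ne_zero
  have hdiff := sq_norm_denom_sub_sq_norm_numer α β z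
  rw [hαβ, one_mul] at hdiff
  exact (pow_lt_pow_iff_left₀ (norm_nonneg _) (norm_nonneg _) two_ne_zero).1 (by linarith)

lemma denom_ne_zero {z : ℂ} (hz : ‖z‖ < 1) : conj β * z + conj α ≠ 0 :=
  norm_pos_iff.1 ((norm_nonneg _).trans_lt (norm_numer_lt_norm_denom hαβ hz))

lemma norm_mobius_lt_one {z : ℂ} (hz : ‖z‖ < 1) :
    ‖(α * z + β) / (conj β * z + conj α)‖ < 1 := by
  rw [norm_div, div_lt_one (norm_pos_iff.2 (denom_ne_zero hαβ hz))]
  exact norm_numer_lt_norm_denom hαβ hz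

end Determinant

lemma sub_mul_ne_zero_of_norm_lt {𝕜 : Type*} [NormedDivisionRing 𝕜] {a b z : 𝕜}
    (hab : ‖a‖ < ‖b‖) (hz : ‖z‖ ≤ 1) : b - a * z ≠ 0 := by
  have haz : ‖a * z‖ < ‖b‖ := by
    rw [norm_mul]
    exact (mul_le_of_le_one_right (norm_nonneg a) hz).trans_lt hab
  exact norm_pos_iff.1 ((sub_pos.2 haz).trans_le (norm_sub_norm_le b (a * z)))

section Cocycle

variable {α β u v z : ℂ} (hdet : α * conj α - β * conj β = 1)
  (hD : conj β * z + conj α ≠ 0)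
include hdet hD

lemma sub_conj_mul_mobius :
    α * u + β * conj v - conj (α * v + β * conj u) * ((α * z + β) / (conj β * z + conj α))
      = (u - conj v * z) / (conj β * z + conj α) := by
  simp only [map_add, map_mul, Complex.conj_conj]
  field_simp
  linear_combination (u - conj v * z) * hdet

lemma conj_mul_mobius_sub :
    conj (α * u + β * conj v) * ((α * z + β) / (conj β * z + conj α)) - (α * v + β * conj u)
      = (conj u * z - v) / (conj β * z + conj α) := by
  simp only [map_add, map_mul, Complex.conj_conj]
  field_simp
  linear_combination (conj u * z - v) * hdet

end Cocycle

end SU11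

open SU11 in
/-- **Section 12: invariance of the leafwise holomorphic function under SU(1,1).**
For `|α|² - |β|² = 1`, `|v| < |u|`, `|z| < 1`, and `r = αu + βv̄`, `s = αv + βū`,
`w = (αz+β)/(β̄z+ᾱ)`: (a) `|r|² - |s|² = (|α|²-|β|²)(|u|²-|v|²) = |u|²-|v|²`, so `|s| < |r|`;
(b) `β̄z+ᾱ ≠ 0` and `|w| < 1`; (c) `u - v̄z ≠ 0`, `r - s̄w ≠ 0`, and
`(r̄w - s)/(r - s̄w) = (ūz - v)/(u - v̄z)`. -/
theorem su11_invariance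
    (α β u v z r s w : ℂ)
    (hαβ : ‖α‖ ^ 2 - ‖β‖ ^ 2 = 1) (huv : ‖v‖ < ‖u‖) (hz : ‖z‖ < 1)
    (hr : r = α * u + β * conj v) (hs : s = α * v + β * conj u)
    (hw : w = (α * z + β) / (conj β * z + conj α)) :
    (‖r‖ ^ 2 - ‖s‖ ^ 2 = (‖α‖ ^ 2 - ‖β‖ ^ 2) * (‖u‖ ^ 2 - ‖v‖ ^ 2) ∧
      ‖r‖ ^ 2 - ‖s‖ ^ 2 = ‖u‖ ^ 2 - ‖v‖ ^ 2 ∧ ‖s‖ < ‖r‖) ∧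
    (conj β * z + conj α ≠ 0 ∧ ‖w‖ < 1) ∧
    (u - conj v * z ≠ 0 ∧ r - conj s * w ≠ 0 ∧
      (conj r * w - s) / (r - conj s * w) = (conj u * z - v) / (u - conj v * z)) := by
  subst hr hs hw
  have hdet := mul_conj_sub_mul_conj_eq_one hαβ
  have hD := denom_ne_zero hαβ hz
  have hform := sq_norm_sub_sq_norm_eq_det_mul α β u v
  have hform' := hform.trans (by rw [hαβ, one_mul])
  have hsr : ‖α * v + β * conj u‖ < ‖α * u + β * conj v‖ := by
    have := pow_lt_pow_left₀ huv (norm_nonneg v) two_ne_zero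
    exact (pow_lt_pow_iff_left₀ (norm_nonneg _) (norm_nonneg _) two_ne_zero).1 (by linarith)
  have hden : u - conj v * z ≠ 0 :=
    sub_mul_ne_zero_of_norm_lt (by rwa [Complex.norm_conj]) hz.le
  refine ⟨⟨hform, hform', hsr⟩, ⟨hD, norm_mobius_lt_one hαβ hz⟩, hden, ?_, ?_⟩
  · rw [sub_conj_mul_mobius hdet hD]
    exact div_ne_zero hden hD
  · rw [sub_conj_mul_mobius hdet hD, conj_mul_mobius_sub hdet hD, div_div_div_cancel_right₀ hD]
end
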